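/- arXiv:1001.1625 — 2 statements merged into one kernel-verified Lean document; each statement's English description precedes it below -/
import Mathlib

section
/- Let H ∈ M_{n×m}(ℝ) have linearly independent columns h_1, …, h_m with Gram–Schmidt vectors h_1*, …, h_m*, let y ∈ ℝ^n, t > 0, and let H̃ be the augmented matrix. Then the Gram–Schmidt vectors h̃_1*, …, h̃_{m+1}* of the columns of H̃ satisfy h̃_i* = (h_i*, 0) for 1 ≤ i ≤ m, the last Gram–Schmidt vector h̃_{m+1}* has last coordinate equal to t (so ‖h̃_{m+1}*‖ ≥ t), and consequently a(H̃) ≥ min(t, a(H)). -/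
open scoped BigOperators

/-- Gram-Schmidt orthogonalization of the system of vectors `h`. -/
noncomputable def gso {n m : ℕ} (h : Fin m → EuclideanSpace ℝ (Fin n)) :
    Fin m → EuclideanSpace ℝ (Fin n) :=
  @InnerProductSpace.gramSchmidt ℝ (EuclideanSpace ℝ (Fin n)) _ _ _ (Fin m) _ _
    (inferInstance : WellFoundedLT (Fin m)) h

/-- Gram-Schmidt coefficients `μ i j = ⟨h i, h* j⟩ / ‖h* j‖²`. -/
noncomputable def mu {n m : ℕ} (h : Fin m → EuclideanSpace ℝ (Fin n)) (i j : Fin m) : ℝ :=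
  (inner ℝ (h i) (gso h j) : ℝ) / ‖gso h j‖ ^ 2

/-- The lattice generated by the vectors `h`. -/
def latticePts {n m : ℕ} (h : Fin m → EuclideanSpace ℝ (Fin n)) :
    Set (EuclideanSpace ℝ (Fin n)) :=
  {v | ∃ x : Fin m → ℤ, v = ∑ i, (x i : ℝ) • h i}

/-- `a(H)`: the minimum norm of the Gram-Schmidt vectors. -/
noncomputable def aMin {n m : ℕ} (h : Fin m → EuclideanSpace ℝ (Fin n)) : ℝ :=
  ⨅ i, ‖gso h i‖

/-- `A(H)`: the maximum norm of the Gram-Schmidt vectors. -/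
noncomputable def AMax {n m : ℕ} (h : Fin m → EuclideanSpace ℝ (Fin n)) : ℝ :=
  ⨆ i, ‖gso h i‖

/-- LLL-reducedness (size reduction + Lovász condition) with parameter `δ`. -/
def IsLLLReduced {n m : ℕ} (δ : ℝ) (h : Fin m → EuclideanSpace ℝ (Fin n)) : Prop :=
  (∀ k l : Fin m, l < k → |mu h k l| ≤ 1 / 2) ∧
  (∀ k l : Fin m, (l : ℕ) + 1 = (k : ℕ) →
    δ * ‖gso h l‖ ^ 2 ≤ ‖gso h k + mu h k l • gso h l‖ ^ 2)

/-- Append the coordinate `c` to the vector `v`. -/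
noncomputable def aug {n : ℕ} (v : EuclideanSpace ℝ (Fin n)) (c : ℝ) :
    EuclideanSpace ℝ (Fin (n + 1)) :=
  (WithLp.equiv 2 (Fin (n + 1) → ℝ)).symm (Fin.snoc ((WithLp.equiv 2 (Fin n → ℝ)) v) c)

/-- Columns of the augmented matrix `H̃`: the columns `(h i, 0)` followed by `(-y, t)`. -/
noncomputable def augCols {n m : ℕ} (h : Fin m → EuclideanSpace ℝ (Fin n))
    (y : EuclideanSpace ℝ (Fin n)) (t : ℝ) : Fin (m + 1) → EuclideanSpace ℝ (Fin (n + 1)) :=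
  Fin.snoc (fun i => aug (h i) 0) (aug (-y) t)

/-- `v` is a `γ`-unique shortest vector of the lattice `L`. -/
def IsUniqueShortest {N : ℕ} (L : Set (EuclideanSpace ℝ (Fin N))) (γ : ℝ)
    (v : EuclideanSpace ℝ (Fin N)) : Prop :=
  v ∈ L ∧ v ≠ 0 ∧ (∀ u ∈ L, u ≠ 0 → ‖v‖ ≤ ‖u‖) ∧
    ∀ u ∈ L, ‖u‖ ≤ γ * ‖v‖ → ¬ LinearIndependent ℝ ![u, v]

/-!
The first `m` columns of `H̃` are the images of `h₁, …, hₘ` under the linear isometry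
`v ↦ (v, 0)`. Gram–Schmidt only looks at earlier vectors and commutes with linear isometries,
hence `h̃ᵢ* = (hᵢ*, 0)` for `i ≤ m`. The last-coordinate functional kills these vectors, so it
takes the same value `t` on `h̃*ₘ₊₁` as on the last column `(-y, t)`; and a coordinate of a
vector is bounded by its norm.
-/

open InnerProductSpace

section GramSchmidt

variable {𝕜 E F : Type*} [RCLike 𝕜] [NormedAddCommGroup E] [InnerProductSpace 𝕜 E]
  [NormedAddCommGroup F] [InnerProductSpace 𝕜 F]

theorem gramSchmidt_comp_linearIsometry {ι : Type*} [LinearOrder ι] [LocallyFiniteOrderBot ι]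
    [WellFoundedLT ι] (f : E →ₗᵢ[𝕜] F) (v : ι → E) (i : ι) :
    gramSchmidt 𝕜 (f ∘ v) i = f (gramSchmidt 𝕜 v i) := by
  induction i using WellFoundedLT.induction with
  | ind i ih =>
    rw [gramSchmidt_def, gramSchmidt_def, map_sub, map_sum]
    refine congrArg (f (v i) - ·) (Finset.sum_congr rfl fun j hj => ?_)
    rw [ih j (Finset.mem_Iio.1 hj), Submodule.starProjection_singleton,
      Submodule.starProjection_singleton,
      Function.comp_apply, f.inner_map_map, f.norm_map, map_smul]

theorem gramSchmidt_snoc_castSucc {m : ℕ} (v : Fin m → E) (x : E) (i : Fin m) :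
    gramSchmidt 𝕜 (Fin.snoc v x : Fin (m + 1) → E) i.castSucc = gramSchmidt 𝕜 v i := by
  induction i using WellFoundedLT.induction with
  | ind i ih =>
    rw [gramSchmidt_def, gramSchmidt_def, Fin.Iio_castSucc, Finset.sum_map, Fin.snoc_castSucc]
    refine congrArg (v i - ·) (Finset.sum_congr rfl fun j hj => ?_)
    rw [Fin.coe_castSuccEmb, ih j (Finset.mem_Iio.1 hj)]

theorem map_gramSchmidt_eq_of_forall_lt {ι : Type*} [LinearOrder ι] [LocallyFiniteOrderBot ι]
    [WellFoundedLT ι] (φ : E →ₗ[𝕜] 𝕜) (v : ι → E) {i : ι}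
    (hφ : ∀ j < i, φ (gramSchmidt 𝕜 v j) = 0) :
    φ (gramSchmidt 𝕜 v i) = φ (v i) := by
  rw [gramSchmidt_def, map_sub, map_sum, sub_eq_self]
  refine Finset.sum_eq_zero fun j hj => ?_
  rw [Submodule.starProjection_singleton, map_smul, hφ j (Finset.mem_Iio.1 hj), smul_zero]

end GramSchmidt

section Augment

variable {n m : ℕ}

@[simp]
theorem aug_apply_castSucc (v : EuclideanSpace ℝ (Fin n)) (c : ℝ) (i : Fin n) :
    aug v c i.castSucc = v i := by
  simp [aug]

@[simp]
theorem aug_apply_last (v : EuclideanSpace ℝ (Fin n)) (c : ℝ) : aug v c (Fin.last n) = c := by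
  simp [aug]

theorem norm_aug_sq (v : EuclideanSpace ℝ (Fin n)) (c : ℝ) :
    ‖aug v c‖ ^ 2 = ‖v‖ ^ 2 + c ^ 2 := by
  simp [EuclideanSpace.real_norm_sq_eq, Fin.sum_univ_castSucc]

variable (n) in
noncomputable def augZeroₗᵢ :
    EuclideanSpace ℝ (Fin n) →ₗᵢ[ℝ] EuclideanSpace ℝ (Fin (n + 1)) where
  toFun v := aug v 0
  map_add' u v := by
    ext i
    induction i using Fin.lastCases <;> simp
  map_smul' c v := by
    ext i
    induction i using Fin.lastCases <;> simp
  norm_map' v := (sq_eq_sq₀ (norm_nonneg _) (norm_nonneg _)).1 (by simp [norm_aug_sq])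

@[simp]
theorem augZeroₗᵢ_apply (v : EuclideanSpace ℝ (Fin n)) : augZeroₗᵢ n v = aug v 0 := rfl

theorem augCols_eq_snoc (h : Fin m → EuclideanSpace ℝ (Fin n)) (y : EuclideanSpace ℝ (Fin n))
    (t : ℝ) : augCols h y t = Fin.snoc (augZeroₗᵢ n ∘ h) (aug (-y) t) := rfl

theorem gso_augCols_castSucc (h : Fin m → EuclideanSpace ℝ (Fin n))
    (y : EuclideanSpace ℝ (Fin n)) (t : ℝ) (i : Fin m) :
    gso (augCols h y t) i.castSucc = aug (gso h i) 0 := by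
  rw [gso, gso, augCols_eq_snoc, gramSchmidt_snoc_castSucc, gramSchmidt_comp_linearIsometry,
    augZeroₗᵢ_apply]

theorem gso_augCols_last_apply_last (h : Fin m → EuclideanSpace ℝ (Fin n))
    (y : EuclideanSpace ℝ (Fin n)) (t : ℝ) :
    gso (augCols h y t) (Fin.last m) (Fin.last n) = t := by
  have hφ := map_gramSchmidt_eq_of_forall_lt (EuclideanSpace.projₗ (Fin.last n))
    (augCols h y t) (i := Fin.last m) fun j hj => by
      obtain ⟨j, rfl⟩ := Fin.exists_castSucc_eq.2 (Fin.lt_last_iff_ne_last.1 hj)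
      exact (congrArg (· (Fin.last n)) (gso_augCols_castSucc h y t j)).trans (aug_apply_last _ _)
  simpa [gso, augCols] using hφ

end Augment

theorem aMin_le {n m : ℕ} (h : Fin m → EuclideanSpace ℝ (Fin n)) (i : Fin m) :
    aMin h ≤ ‖gso h i‖ :=
  ciInf_le ⟨0, Set.forall_mem_range.2 fun _ => norm_nonneg _⟩ i

theorem statement11_general {n m : ℕ}
    (h : Fin m → EuclideanSpace ℝ (Fin n))
    (y : EuclideanSpace ℝ (Fin n)) (t : ℝ) :
    (∀ i : Fin m, gso (augCols h y t) i.castSucc = aug (gso h i) 0) ∧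
      (WithLp.equiv 2 (Fin (n + 1) → ℝ)) (gso (augCols h y t) (Fin.last m)) (Fin.last n) = t ∧
      t ≤ ‖gso (augCols h y t) (Fin.last m)‖ ∧
      min t (aMin h) ≤ aMin (augCols h y t) := by
  have hlast := gso_augCols_last_apply_last h y t
  have ht_le : t ≤ ‖gso (augCols h y t) (Fin.last m)‖ :=
    calc t ≤ |t| := le_abs_self t
      _ = ‖gso (augCols h y t) (Fin.last m) (Fin.last n)‖ := by rw [Real.norm_eq_abs, hlast]
      _ ≤ _ := PiLp.norm_apply_le _ _
  refine ⟨gso_augCols_castSucc h y t, hlast, ht_le, le_ciInf fun i => ?_⟩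
  induction i using Fin.lastCases with
  | last => exact (min_le_left _ _).trans ht_le
  | cast i =>
    calc min t (aMin h) ≤ ‖gso h i‖ := (min_le_right _ _).trans (aMin_le h i)
      _ = ‖gso (augCols h y t) i.castSucc‖ := by
        rw [gso_augCols_castSucc, ← augZeroₗᵢ_apply, LinearIsometry.norm_map]

/-- the Gram-Schmidt vectors of the augmented matrix are
`(h_i*, 0)` for `i ≤ m`; the last one has last coordinate `t` (so its norm is `≥ t`),
and consequently `a(H̃) ≥ min(t, a(H))`. -/
theorem statement11 {n m : ℕ} (hm : 0 < m)
    (h : Fin m → EuclideanSpace ℝ (Fin n)) (hli : LinearIndependent ℝ h)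
    (y : EuclideanSpace ℝ (Fin n)) (t : ℝ) (ht : 0 < t) :
    (∀ i : Fin m, gso (augCols h y t) i.castSucc = aug (gso h i) 0) ∧
      (WithLp.equiv 2 (Fin (n + 1) → ℝ)) (gso (augCols h y t) (Fin.last m)) (Fin.last n) = t ∧
      t ≤ ‖gso (augCols h y t) (Fin.last m)‖ ∧
      min t (aMin h) ≤ aMin (augCols h y t) :=
  statement11_general h y t
end

section
/- Let h_1, …, h_m be linearly independent vectors in ℝ^n with Gram–Schmidt vectors h_1*, …, h_m* and coefficients μ_{i,j}, let δ ≤ 1, and suppose the Lovász condition fails at index k, i.e. ‖h_k* + μ_{k,k−1} h_{k−1}*‖² < δ ‖h_{k−1}*‖². Let h′_1, …, h′_m be the basis obtained by swapping h_{k−1} and h_k, with Gram–Schmidt vectors h′_i*. Then min_{1≤i≤m} ‖h′_i*‖ ≥ min_{1≤i≤m} ‖h_i*‖; that is, a swap step of the LLL algorithm does not decrease the minimum Gram–Schmidt norm. -/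
open scoped BigOperators

/-! Swapping the adjacent vectors `h k'` and `h k` leaves every Gram–Schmidt vector other than the
`k'`-th and the `k`-th unchanged. With `u = h*_{k'}`, `v = h*_k` and `w = v + μ_{k,k'} u`, the new
`k'`-th vector is `w` and the new `k`-th one is the component of `u` orthogonal to `w`. Since
`u ⟂ v` we have `‖w‖ ≥ ‖v‖`, and the area of the parallelogram spanned by the two vectors is
unchanged: `‖u - proj_w u‖ ‖w‖ = ‖u‖ ‖v‖`. The failed Lovász condition with `δ ≤ 1` gives
`‖w‖ ≤ ‖u‖`, hence `‖u - proj_w u‖ ≥ ‖v‖`. So every new Gram–Schmidt norm dominates an old one. -/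

open Submodule Set InnerProductSpace
open scoped RealInnerProductSpace

theorem image_swap_Iio_of_covBy_of_ne {ι : Type*} [LinearOrder ι] {i j k : ι} (hjk : j ⋖ k)
    (hik : i ≠ k) : Equiv.swap j k '' Iio i = Iio i := by
  have hjk_lt : j < i ↔ k < i := by
    rw [hjk.lt_iff_le_right, le_iff_lt_or_eq, or_iff_left (Ne.symm hik)]
  ext x
  rw [Equiv.image_eq_preimage_symm, Equiv.symm_swap, mem_preimage, Equiv.swap_apply_def]
  split_ifs <;> simp_all

section GramSchmidt

variable {𝕜 E ι : Type*} [RCLike 𝕜] [NormedAddCommGroup E] [InnerProductSpace 𝕜 E]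
  [LinearOrder ι] [LocallyFiniteOrderBot ι] [WellFoundedLT ι]

theorem sum_starProjection_gramSchmidt_mem_span_Iio (f : ι → E) (i : ι) (x : E) :
    ∑ j ∈ Finset.Iio i, (𝕜 ∙ gramSchmidt 𝕜 f j).starProjection x ∈ span 𝕜 (f '' Iio i) := by
  rw [← span_gramSchmidt_Iio]
  refine sum_mem fun j hj => ?_
  refine span_singleton_le_iff_mem _ _ |>.2 (subset_span ?_) (starProjection_apply_mem _ _)
  exact mem_image_of_mem _ (Finset.mem_Iio.1 hj)

theorem sub_gramSchmidt_mem_span_Iio (f : ι → E) (i : ι) :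
    f i - gramSchmidt 𝕜 f i ∈ span 𝕜 (f '' Iio i) := by
  rw [gramSchmidt_def 𝕜 f i, sub_sub_cancel]
  exact sum_starProjection_gramSchmidt_mem_span_Iio f i (f i)

theorem gramSchmidt_mem_orthogonal_span_Iio (f : ι → E) (i : ι) :
    gramSchmidt 𝕜 f i ∈ (span 𝕜 (f '' Iio i))ᗮ := by
  rw [← span_gramSchmidt_Iio, ← span_singleton_le_iff_mem]
  refine IsOrtho.ge (isOrtho_span.2 ?_)
  rintro _ ⟨j, hj, rfl⟩ _ rfl
  exact gramSchmidt_orthogonal 𝕜 f hj.ne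

theorem gramSchmidt_eq_of_sub_mem_of_mem_orthogonal {f : ι → E} {i : ι} {v : E}
    (hsub : f i - v ∈ span 𝕜 (f '' Iio i)) (horth : v ∈ (span 𝕜 (f '' Iio i))ᗮ) :
    gramSchmidt 𝕜 f i = v := by
  have hmem := sub_mem hsub (sub_gramSchmidt_mem_span_Iio (𝕜 := 𝕜) f i)
  rw [sub_sub_sub_cancel_left] at hmem
  rw [← sub_eq_zero, ← mem_bot 𝕜, ← inf_orthogonal_eq_bot (span 𝕜 (f '' Iio i))]
  exact ⟨hmem, sub_mem (gramSchmidt_mem_orthogonal_span_Iio f i) horth⟩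

theorem gramSchmidt_congr {f g : ι → E} {i : ι} (hi : f i = g i)
    (hspan : span 𝕜 (f '' Iio i) = span 𝕜 (g '' Iio i)) :
    gramSchmidt 𝕜 f i = gramSchmidt 𝕜 g i := by
  refine (gramSchmidt_eq_of_sub_mem_of_mem_orthogonal ?_ ?_).symm <;> rw [← hspan]
  · exact hi ▸ sub_gramSchmidt_mem_span_Iio f i
  · exact gramSchmidt_mem_orthogonal_span_Iio f i

variable {i j k : ι}

theorem span_image_Iio_of_covBy (f : ι → E) (hjk : j ⋖ k) :
    span 𝕜 (f '' Iio k) = (𝕜 ∙ gramSchmidt 𝕜 f j) ⊔ span 𝕜 (f '' Iio j) := by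
  rw [← span_gramSchmidt_Iio 𝕜 f j, ← span_gramSchmidt_Iio 𝕜 f k, hjk.Iio_eq, ← Iio_insert,
    image_insert_eq, span_insert]

theorem gramSchmidt_comp_swap_of_ne (f : ι → E) (hjk : j ⋖ k) (hij : i ≠ j) (hik : i ≠ k) :
    gramSchmidt 𝕜 (f ∘ Equiv.swap j k) i = gramSchmidt 𝕜 f i :=
  gramSchmidt_congr (by simp [Equiv.swap_apply_of_ne_of_ne hij hik])
    (by rw [image_comp, image_swap_Iio_of_covBy_of_ne hjk hik])

theorem gramSchmidt_comp_swap_left (f : ι → E) (hjk : j ⋖ k) :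
    gramSchmidt 𝕜 (f ∘ Equiv.swap j k) j =
      gramSchmidt 𝕜 f k + (𝕜 ∙ gramSchmidt 𝕜 f j).starProjection (f k) := by
  have hIio : Finset.Iio k = insert j (Finset.Iio j) := by
    ext x; simp [← Set.mem_Iio, hjk.Iio_eq, le_iff_eq_or_lt]
  have himage : (f ∘ Equiv.swap j k) '' Iio j = f '' Iio j := by
    rw [image_comp, image_swap_Iio_of_covBy_of_ne hjk hjk.lt.ne]
  apply gramSchmidt_eq_of_sub_mem_of_mem_orthogonal <;> rw [himage]
  · have hdef := gramSchmidt_def' 𝕜 f k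
    rw [hIio, Finset.sum_insert Finset.notMem_Iio_self, ← add_assoc] at hdef
    rw [Function.comp_apply, Equiv.swap_apply_left, sub_eq_iff_eq_add'.2 hdef]
    exact sum_starProjection_gramSchmidt_mem_span_Iio f j (f k)
  · refine add_mem ?_ ?_
    · exact orthogonal_le (span_mono (image_mono (Iio_subset_Iio hjk.le)))
        (gramSchmidt_mem_orthogonal_span_Iio f k)
    · exact span_singleton_le_iff_mem _ _ |>.2 (gramSchmidt_mem_orthogonal_span_Iio f j)
        (starProjection_apply_mem _ _)

theorem gramSchmidt_comp_swap_right (f : ι → E) (hjk : j ⋖ k) :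
    gramSchmidt 𝕜 (f ∘ Equiv.swap j k) k = gramSchmidt 𝕜 f j -
      (𝕜 ∙ gramSchmidt 𝕜 (f ∘ Equiv.swap j k) j).starProjection (gramSchmidt 𝕜 f j) := by
  set g := f ∘ Equiv.swap j k
  have hspan : span 𝕜 (g '' Iio j) = span 𝕜 (f '' Iio j) := by
    rw [image_comp, image_swap_Iio_of_covBy_of_ne hjk hjk.lt.ne]
  apply gramSchmidt_eq_of_sub_mem_of_mem_orthogonal <;> rw [span_image_Iio_of_covBy g hjk, hspan]
  · have hg : g k = f j := by simp [g]
    rw [hg, sub_sub_eq_add_sub, add_sub_right_comm, add_comm]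
    exact add_mem_sup (starProjection_apply_mem _ _) (sub_gramSchmidt_mem_span_Iio f j)
  · rw [← inf_orthogonal]
    refine ⟨sub_starProjection_mem_orthogonal _,
      sub_mem (gramSchmidt_mem_orthogonal_span_Iio f j) ?_⟩
    refine span_singleton_le_iff_mem _ _ |>.2 ?_ (starProjection_apply_mem _ _)
    exact hspan ▸ gramSchmidt_mem_orthogonal_span_Iio g j

end GramSchmidt

section Real

variable {F : Type*} [NormedAddCommGroup F] [InnerProductSpace ℝ F]

theorem norm_sub_starProjection_singleton_sq_mul (w x : F) :
    ‖x - (ℝ ∙ w).starProjection x‖ ^ 2 * ‖w‖ ^ 2 = ‖x‖ ^ 2 * ‖w‖ ^ 2 - ⟪w, x⟫ ^ 2 := by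
  rcases eq_or_ne w 0 with rfl | hw
  · simp
  rw [starProjection_singleton, norm_sub_sq_real, inner_smul_right, norm_smul, real_inner_comm x w]
  simp only [RCLike.ofReal_real_eq_id, id, Real.norm_eq_abs, mul_pow, sq_abs]
  field_simp
  ring

theorem norm_add_smul_sq_of_inner_eq_zero {u v : F} (huv : ⟪u, v⟫ = 0) (a : ℝ) :
    ‖v + a • u‖ ^ 2 = ‖v‖ ^ 2 + a ^ 2 * ‖u‖ ^ 2 := by
  rw [norm_add_sq_real, inner_smul_right, real_inner_comm, huv, norm_smul, mul_pow,
    Real.norm_eq_abs, sq_abs]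
  ring

theorem norm_le_norm_add_smul_of_inner_eq_zero {u v : F} (huv : ⟪u, v⟫ = 0) (a : ℝ) :
    ‖v‖ ≤ ‖v + a • u‖ := by
  rw [← sq_le_sq₀ (norm_nonneg _) (norm_nonneg _), norm_add_smul_sq_of_inner_eq_zero huv]
  exact le_add_of_nonneg_right (by positivity)

theorem norm_le_norm_sub_starProjection_add_smul {u v : F} (huv : ⟪u, v⟫ = 0) {a : ℝ}
    (h : ‖v + a • u‖ ≤ ‖u‖) : ‖v‖ ≤ ‖u - (ℝ ∙ (v + a • u)).starProjection u‖ := by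
  have hw := norm_add_smul_sq_of_inner_eq_zero huv a
  have hwu : ⟪v + a • u, u⟫ = a * ‖u‖ ^ 2 := by
    rw [inner_add_left, real_inner_comm, huv, real_inner_smul_left, real_inner_self_eq_norm_sq,
      zero_add]
  have hgram := norm_sub_starProjection_singleton_sq_mul (v + a • u) u
  rw [hwu] at hgram
  rw [← sq_le_sq₀ (norm_nonneg _) (norm_nonneg _)]
  rcases (sq_nonneg ‖v + a • u‖).eq_or_lt with h0 | hpos
  · have hv := pow_le_pow_left₀ (norm_nonneg _) (norm_le_norm_add_smul_of_inner_eq_zero huv a) 2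
    exact (hv.trans h0.ge).trans (sq_nonneg _)
  · refine le_of_mul_le_mul_right ?_ hpos
    calc ‖v‖ ^ 2 * ‖v + a • u‖ ^ 2 ≤ ‖v‖ ^ 2 * ‖u‖ ^ 2 :=
          mul_le_mul_of_nonneg_left (pow_le_pow_left₀ (norm_nonneg _) h 2) (sq_nonneg _)
      _ = _ := by rw [hgram, hw]; ring

end Real

theorem gso_eq_gramSchmidt {n m : ℕ} (h : Fin m → EuclideanSpace ℝ (Fin n)) :
    gso h = gramSchmidt ℝ h :=
  rfl

theorem mu_smul_gso_eq_starProjection {n m : ℕ} (h : Fin m → EuclideanSpace ℝ (Fin n))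
    (i j : Fin m) : mu h i j • gso h j = (ℝ ∙ gso h j).starProjection (h i) := by
  rw [starProjection_singleton, mu, real_inner_comm]
  rfl

theorem statement13_general {n m : ℕ}
    (h : Fin m → EuclideanSpace ℝ (Fin n))
    (δ : ℝ) (hδ : δ ≤ 1)
    (k k' : Fin m) (hkk' : (k' : ℕ) + 1 = (k : ℕ))
    (hfail : ‖gso h k + mu h k k' • gso h k'‖ ^ 2 < δ * ‖gso h k'‖ ^ 2) :
    aMin h ≤ aMin (h ∘ Equiv.swap k' k) := by
  have hcov : k' ⋖ k := Fin.covBy_iff.2 (Nat.covBy_iff_add_one_eq.2 hkk')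
  have horth : ⟪gso h k', gso h k⟫ = 0 := gramSchmidt_orthogonal ℝ h hcov.ne
  have hleft : gso (h ∘ Equiv.swap k' k) k' = gso h k + mu h k k' • gso h k' := by
    rw [mu_smul_gso_eq_starProjection, gso_eq_gramSchmidt, gso_eq_gramSchmidt,
      gramSchmidt_comp_swap_left h hcov]
  have hshort : ‖gso h k + mu h k k' • gso h k'‖ ≤ ‖gso h k'‖ := by
    rw [← sq_le_sq₀ (norm_nonneg _) (norm_nonneg _)]
    exact (hfail.trans_le (mul_le_of_le_one_left (sq_nonneg _) hδ)).le
  have : Nonempty (Fin m) := ⟨k⟩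
  refine ciInf_mono_of_forall_exists (Finite.bddBelow_range _) fun i => ?_
  by_cases hik' : i = k'
  · refine ⟨k, ?_⟩
    rw [hik', hleft]
    exact norm_le_norm_add_smul_of_inner_eq_zero horth _
  by_cases hik : i = k
  · refine ⟨k, ?_⟩
    rw [hik, gso_eq_gramSchmidt (h ∘ _), gramSchmidt_comp_swap_right h hcov,
      ← gso_eq_gramSchmidt h, ← gso_eq_gramSchmidt (h ∘ _), hleft]
    exact norm_le_norm_sub_starProjection_add_smul horth hshort
  · exact ⟨i, (congrArg norm (gramSchmidt_comp_swap_of_ne h hcov hik' hik)).ge⟩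

/-- a swap step of the LLL algorithm (performed when the Lovász condition
fails at index `k`) does not decrease the minimum Gram-Schmidt norm. -/
theorem statement13 {n m : ℕ}
    (h : Fin m → EuclideanSpace ℝ (Fin n)) (hli : LinearIndependent ℝ h)
    (δ : ℝ) (hδ : δ ≤ 1)
    (k k' : Fin m) (hkk' : (k' : ℕ) + 1 = (k : ℕ))
    (hfail : ‖gso h k + mu h k k' • gso h k'‖ ^ 2 < δ * ‖gso h k'‖ ^ 2) :
    aMin h ≤ aMin (h ∘ Equiv.swap k' k) :=
  statement13_general h δ hδ k k' hkk' hfail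
end
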